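/- arXiv:2209.01234 — 3 statements merged into one kernel-verified Lean document; each statement's English description precedes it below -/
import Mathlib

section
/- Define r_h(m) > 0 by the relation -log(tanh(r_h/2)) = ∫_{ρ_h(m)}^∞ dρ / √(ρ² - 2mρ + (|Λ|/3)ρ⁴), where ρ_h(m) is the unique positive root of m = (ρ/2)(1 + (|Λ|/3)ρ²). Then r_h(m) → ∞ as m → ∞. -/
/-!
The horizon radius `ρ_h(m)` grows without bound with `m`, and on `(c, ∞)`, `c = ρ_h(m)`, the
radicand dominates `a ρ² (ρ² - c²)` (`a = |Λ|/3`): their difference is `ρ (ρ - c) (1 + a c²)`.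
Hence the integral is at most `a^(-1/2) ∫_c^∞ dρ / (ρ √(ρ² - c²)) = π / (2 √a c)`, which tends
to `0`. So `-log (tanh (r_h / 2)) → 0`, i.e. `tanh (r_h / 2) → 1`, which forces `r_h → ∞`.
-/

open Filter MeasureTheory

open Real Set Topology

theorem Real.tanh_strictMono : StrictMono tanh := fun x y hxy => by
  have hmem : ∀ z, tanh z ∈ Ioo (-1) 1 := fun z => ⟨neg_one_lt_tanh z, tanh_lt_one z⟩
  rwa [← artanh_lt_artanh_iff (hmem x) (hmem y), artanh_tanh, artanh_tanh]

theorem Real.tanh_pos {x : ℝ} (hx : 0 < x) : 0 < tanh x := by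
  simpa using tanh_strictMono hx

lemma neg_log_tanh_half_pos {r : ℝ} (hr : 0 < r) : 0 < -log (tanh (r / 2)) :=
  neg_pos.2 (log_neg (tanh_pos (half_pos hr)) (tanh_lt_one _))

lemma strictAntiOn_neg_log_tanh_half : StrictAntiOn (fun r => -log (tanh (r / 2))) (Ioi 0) :=
  fun _ hr _ _ hrs => neg_lt_neg <| log_lt_log (tanh_pos (half_pos hr)) <|
    tanh_strictMono (div_lt_div_of_pos_right hrs two_pos)

lemma tendsto_atTop_of_neg_log_tanh_half_tendsto_zero {α : Type*} {l : Filter α} {r : α → ℝ}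
    (hpos : ∀ᶠ x in l, 0 < r x) (h : Tendsto (fun x => -log (tanh (r x / 2))) l (𝓝 0)) :
    Tendsto r l atTop := by
  refine tendsto_atTop.2 fun C => ?_
  have hC : (0 : ℝ) < max C 1 := lt_max_of_lt_right one_pos
  filter_upwards [hpos, h.eventually (gt_mem_nhds (neg_log_tanh_half_pos hC))] with x hx hlt
  exact (le_max_left C 1).trans <|
    (strictAntiOn_neg_log_tanh_half.le_iff_ge (mem_Ioi.2 hx) (mem_Ioi.2 hC)).1 hlt.le

lemma tendsto_atTop_of_strictMono_comp {α β γ : Type*} [LinearOrder β] [Preorder γ]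
    {l : Filter α} {u : α → β} {g : β → γ} (hg : StrictMono g)
    (h : Tendsto (fun x => g (u x)) l atTop) : Tendsto u l atTop :=
  tendsto_atTop.2 fun b => (tendsto_atTop.1 h (g b)).mono fun _ hx => hg.le_iff_le.1 hx

/-- The mass of the Schwarzschild–AdS time slice whose horizon has area radius `ρ`,
for `a = |Λ| / 3`. -/
noncomputable def horizonMass (a ρ : ℝ) : ℝ := ρ / 2 * (1 + a * ρ ^ 2)

lemma horizonMass_strictMono {a : ℝ} (ha : 0 ≤ a) : StrictMono (horizonMass a) := by
  intro x y hxy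
  have hq : 0 ≤ x ^ 2 + x * y + y ^ 2 := by nlinarith [sq_nonneg (x + y)]
  have : horizonMass a y - horizonMass a x = (y - x) / 2 * (1 + a * (x ^ 2 + x * y + y ^ 2)) := by
    unfold horizonMass; ring
  nlinarith [mul_pos (half_pos (sub_pos.2 hxy)) (add_pos_of_pos_of_nonneg one_pos
    (mul_nonneg ha hq))]

section ArctanPrimitive

variable {c : ℝ}

lemma hasDerivAt_arctan_sqrt_sq_sub_sq_div (hc : 0 < c) {ρ : ℝ} (hρ : c < ρ) :
    HasDerivAt (fun ρ => arctan (√(ρ ^ 2 - c ^ 2) / c) / c) (ρ * √(ρ ^ 2 - c ^ 2))⁻¹ ρ := by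
  have hρ0 : 0 < ρ := hc.trans hρ
  have hsub : 0 < ρ ^ 2 - c ^ 2 := by nlinarith
  have hsqrt := ((hasDerivAt_pow 2 ρ).sub_const (c ^ 2)).sqrt hsub.ne'
  refine (((hasDerivAt_arctan _).comp ρ (hsqrt.div_const c)).div_const c).congr_deriv ?_
  have hs : √(ρ ^ 2 - c ^ 2) ^ 2 = ρ ^ 2 - c ^ 2 := sq_sqrt hsub.le
  have hs0 : 0 < √(ρ ^ 2 - c ^ 2) := sqrt_pos.2 hsub
  rw [div_pow, hs]
  field_simp
  ring

lemma continuous_arctan_sqrt_sq_sub_sq_div :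
    Continuous (fun ρ => arctan (√(ρ ^ 2 - c ^ 2) / c) / c) := by
  fun_prop

lemma tendsto_arctan_sqrt_sq_sub_sq_div (hc : 0 < c) :
    Tendsto (fun ρ => arctan (√(ρ ^ 2 - c ^ 2) / c) / c) atTop (𝓝 (π / 2 / c)) := by
  have hsqrt : Tendsto (fun ρ => √(ρ ^ 2 - c ^ 2) / c) atTop atTop :=
    (tendsto_sqrt_atTop.comp (tendsto_atTop_add_const_right _ _
      (tendsto_pow_atTop two_ne_zero))).atTop_div_const hc
  exact ((tendsto_arctan_atTop.mono_right nhdsWithin_le_nhds).comp hsqrt).div_const c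

lemma inv_mul_sqrt_sq_sub_sq_nonneg (hc : 0 < c) {ρ : ℝ} (hρ : c < ρ) :
    0 ≤ (ρ * √(ρ ^ 2 - c ^ 2))⁻¹ := by
  have : 0 < ρ := hc.trans hρ
  positivity

lemma integrableOn_Ioi_inv_mul_sqrt_sq_sub_sq (hc : 0 < c) :
    IntegrableOn (fun ρ => (ρ * √(ρ ^ 2 - c ^ 2))⁻¹) (Ioi c) :=
  integrableOn_Ioi_deriv_of_nonneg continuous_arctan_sqrt_sq_sub_sq_div.continuousWithinAt
    (fun _ => hasDerivAt_arctan_sqrt_sq_sub_sq_div hc)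
    (fun _ => inv_mul_sqrt_sq_sub_sq_nonneg hc) (tendsto_arctan_sqrt_sq_sub_sq_div hc)

lemma integral_Ioi_inv_mul_sqrt_sq_sub_sq (hc : 0 < c) :
    ∫ ρ in Ioi c, (ρ * √(ρ ^ 2 - c ^ 2))⁻¹ = π / (2 * c) := by
  rw [integral_Ioi_of_hasDerivAt_of_nonneg continuous_arctan_sqrt_sq_sub_sq_div.continuousWithinAt
    (fun _ => hasDerivAt_arctan_sqrt_sq_sub_sq_div hc)
    (fun _ => inv_mul_sqrt_sq_sub_sq_nonneg hc) (tendsto_arctan_sqrt_sq_sub_sq_div hc)]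
  simp only [sub_self, sqrt_zero, zero_div, arctan_zero, sub_zero]
  ring

end ArctanPrimitive

section HorizonIntegral

variable {a c m ρ : ℝ}

lemma mul_sq_mul_sq_sub_sq_le_radicand (ha : 0 ≤ a) (hc : 0 ≤ c) (hm : m = horizonMass a c)
    (hρ : c ≤ ρ) : a * ρ ^ 2 * (ρ ^ 2 - c ^ 2) ≤ ρ ^ 2 - 2 * m * ρ + a * ρ ^ 4 := by
  have hgap : ρ ^ 2 - 2 * m * ρ + a * ρ ^ 4 - a * ρ ^ 2 * (ρ ^ 2 - c ^ 2) =
      ρ * (ρ - c) * (1 + a * c ^ 2) := by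
    rw [hm, horizonMass]; ring
  have : 0 ≤ ρ * (ρ - c) * (1 + a * c ^ 2) :=
    mul_nonneg (mul_nonneg (hc.trans hρ) (sub_nonneg.2 hρ)) (by positivity)
  linarith

lemma one_div_sqrt_radicand_le (ha : 0 < a) (hc : 0 < c) (hm : m = horizonMass a c)
    (hρ : c < ρ) :
    1 / √(ρ ^ 2 - 2 * m * ρ + a * ρ ^ 4) ≤ (√a)⁻¹ * (ρ * √(ρ ^ 2 - c ^ 2))⁻¹ := by
  have hρ0 : 0 < ρ := hc.trans hρ
  have hsub : 0 < ρ ^ 2 - c ^ 2 := by nlinarith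
  have hsplit : √(a * ρ ^ 2 * (ρ ^ 2 - c ^ 2)) = √a * (ρ * √(ρ ^ 2 - c ^ 2)) := by
    rw [sqrt_mul (by positivity), sqrt_mul ha.le, sqrt_sq hρ0.le, mul_assoc]
  rw [← mul_inv, ← hsplit, ← one_div]
  exact one_div_le_one_div_of_le (sqrt_pos.2 (by positivity))
    (sqrt_le_sqrt (mul_sq_mul_sq_sub_sq_le_radicand ha.le hc.le hm hρ.le))

lemma integral_one_div_sqrt_radicand_le (ha : 0 < a) (hc : 0 < c) (hm : m = horizonMass a c) :
    ∫ ρ in Ioi c, 1 / √(ρ ^ 2 - 2 * m * ρ + a * ρ ^ 4) ≤ (√a)⁻¹ * (π / (2 * c)) := by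
  rw [← integral_Ioi_inv_mul_sqrt_sq_sub_sq hc, ← integral_const_mul]
  refine integral_mono_of_nonneg (.of_forall fun ρ => by positivity)
    ((integrableOn_Ioi_inv_mul_sqrt_sq_sub_sq hc).const_mul _) ?_
  exact (ae_restrict_iff' measurableSet_Ioi).2 <|
    .of_forall fun ρ hρ => one_div_sqrt_radicand_le ha hc hm hρ

end HorizonIntegral

/-- Define `r_h(m) > 0` by `-log(tanh(r_h/2)) = ∫_{ρ_h(m)}^∞ dρ/√(ρ² - 2mρ + (|Λ|/3)ρ⁴)`,
where `ρ_h(m)` is the unique positive root of `m = (ρ/2)(1 + (|Λ|/3)ρ²)`.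
Then `r_h(m) → ∞` as `m → ∞`. -/
theorem conformal_horizon_radius_tendsto_atTop (Λ : ℝ) (hΛ : Λ < 0) (ρh rh : ℝ → ℝ)
    (hρh : ∀ m > (0:ℝ), 0 < ρh m ∧ m = ρh m / 2 * (1 + |Λ| / 3 * (ρh m) ^ 2))
    (hrh : ∀ m > (0:ℝ), 0 < rh m ∧
      -Real.log (Real.tanh (rh m / 2)) =
        ∫ ρ in Set.Ioi (ρh m), 1 / Real.sqrt (ρ ^ 2 - 2 * m * ρ + |Λ| / 3 * ρ ^ 4)) :
    Tendsto rh atTop atTop := by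
  set a := |Λ| / 3
  have ha : 0 < a := div_pos (abs_pos.2 hΛ.ne) three_pos
  have hρh_top : Tendsto ρh atTop atTop :=
    tendsto_atTop_of_strictMono_comp (horizonMass_strictMono ha.le) <| tendsto_id.congr' <|
      (eventually_gt_atTop 0).mono fun m hm => (hρh m hm).2
  have hbound : Tendsto (fun m => (√a)⁻¹ * (π / (2 * ρh m))) atTop (𝓝 0) := by
    simpa using (tendsto_const_nhds.div_atTop (hρh_top.const_mul_atTop two_pos)).const_mul (√a)⁻¹
  refine tendsto_atTop_of_neg_log_tanh_half_tendsto_zero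
    ((eventually_gt_atTop 0).mono fun m hm => (hrh m hm).1) ?_
  refine tendsto_of_tendsto_of_tendsto_of_le_of_le' tendsto_const_nhds hbound ?_ ?_
  · filter_upwards [eventually_gt_atTop 0] with m hm using (neg_log_tanh_half_pos (hrh m hm).1).le
  · filter_upwards [eventually_gt_atTop 0] with m hm
    rw [(hrh m hm).2]
    exact integral_one_div_sqrt_radicand_le ha (hρh m hm).1 (hρh m hm).2
end

section
/- For fixed Λ < 0, after the substitution ρ̄ = ρ m^{-1/3}, one has m^{-1/3} ∫_{ρ_h m^{-1/3}}^∞ dρ̄ / √(m^{-2/3}ρ̄² - 2ρ̄ + (|Λ|/3)ρ̄⁴) → 0 as m → ∞, where ρ_h = ρ_h(m) is the horizon radius; consequently ∫_{ρ_h(m)}^∞ dρ / √(ρ² - 2mρ + (|Λ|/3)ρ⁴) → 0 as m → ∞. -/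
/-!
Put `t = m^{-1/3}` and `s = ρ_h(m) t`. The horizon equation becomes `s t²/2 + (|Λ|/6) s³ = 1`,
and the substitution `ρ = x / t` turns the second integral into the first one,
`t ∫_s^∞ dx / √(t²x² - 2x + (|Λ|/3)x⁴)`. The rescaled integral is bounded independently of `m`:
the radicand vanishes at `x = s` with difference quotient at least `1` on `[s, ∞)`, so near `s` the
integrand is at most `(x - s)^{-1/2}`, while for `x³ ≥ 12/|Λ|` the radicand dominates
`(|Λ|/6)x⁴`. Hence both quantities are `O(m^{-1/3})`.
-/

open Filter MeasureTheory Set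

lemma one_div_sqrt_eq_rpow {x : ℝ} (hx : 0 ≤ x) : 1 / Real.sqrt x = x ^ (-(1/2) : ℝ) := by
  rw [Real.rpow_neg hx, Real.sqrt_eq_rpow, one_div]

lemma one_div_sq_eq_rpow (x : ℝ) : 1 / x ^ 2 = x ^ (-2 : ℝ) := by
  rw [show (-2 : ℝ) = ((-2 : ℤ) : ℝ) by norm_num, Real.rpow_intCast, zpow_neg, zpow_ofNat,
    one_div]

lemma one_div_sqrt_mul_pow_four (a x : ℝ) :
    1 / Real.sqrt (a * x ^ 4) = (Real.sqrt a)⁻¹ * (1 / x ^ 2) := by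
  rw [Real.sqrt_mul' _ (by positivity), show x ^ 4 = (x ^ 2) ^ 2 by ring,
    Real.sqrt_sq (sq_nonneg x), one_div, mul_inv, one_div]

lemma integrableOn_Ioc_one_div_sqrt_sub {s c : ℝ} (hsc : s ≤ c) :
    IntegrableOn (fun x => 1 / Real.sqrt (x - s)) (Ioc s c) := by
  have h := (intervalIntegral.intervalIntegrable_rpow' (a := 0) (b := c - s)
    (r := -(1/2)) (by norm_num)).comp_sub_right s
  rw [zero_add, sub_add_cancel, intervalIntegrable_iff_integrableOn_Ioc_of_le hsc] at h
  exact h.congr_fun (fun x hx => (one_div_sqrt_eq_rpow (sub_pos.mpr hx.1).le).symm)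
    measurableSet_Ioc

lemma integral_Ioc_one_div_sqrt_sub {s c : ℝ} (hsc : s ≤ c) :
    ∫ x in Ioc s c, 1 / Real.sqrt (x - s) = 2 * Real.sqrt (c - s) := by
  rw [setIntegral_congr_fun measurableSet_Ioc
      (fun x hx => one_div_sqrt_eq_rpow (sub_pos.mpr hx.1).le),
    ← intervalIntegral.integral_of_le hsc,
    intervalIntegral.integral_comp_sub_right (fun y : ℝ => y ^ (-(1/2) : ℝ)),
    integral_rpow (Or.inl (by norm_num)), sub_self, Real.zero_rpow (by norm_num),
    Real.sqrt_eq_rpow]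
  norm_num
  ring

lemma integrableOn_Ioi_one_div_sq {c : ℝ} (hc : 0 < c) :
    IntegrableOn (fun x : ℝ => 1 / x ^ 2) (Ioi c) := by
  simpa only [one_div_sq_eq_rpow] using integrableOn_Ioi_rpow_of_lt (by norm_num) hc

lemma integral_Ioi_one_div_sq {c : ℝ} (hc : 0 < c) :
    ∫ x in Ioi c, 1 / x ^ 2 = c⁻¹ := by
  simp only [one_div_sq_eq_rpow]
  rw [integral_Ioi_rpow_of_lt (by norm_num) hc]
  norm_num [Real.rpow_neg_one]

lemma setIntegral_Ioi_le_of_le_of_le {f g h : ℝ → ℝ} {s c : ℝ} (hsc : s ≤ c)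
    (hf : AEStronglyMeasurable f) (hf0 : ∀ x, 0 ≤ f x)
    (hg : IntegrableOn g (Ioc s c)) (hh : IntegrableOn h (Ioi c))
    (hfg : ∀ x ∈ Ioc s c, f x ≤ g x) (hfh : ∀ x ∈ Ioi c, f x ≤ h x) :
    ∫ x in Ioi s, f x ≤ (∫ x in Ioc s c, g x) + ∫ x in Ioi c, h x := by
  have hfg' : IntegrableOn f (Ioc s c) := hg.mono' hf.restrict <|
    (ae_restrict_iff' measurableSet_Ioc).mpr <| ae_of_all _ fun x hx => by
      rw [Real.norm_of_nonneg (hf0 x)]; exact hfg x hx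
  have hfh' : IntegrableOn f (Ioi c) := hh.mono' hf.restrict <|
    (ae_restrict_iff' measurableSet_Ioi).mpr <| ae_of_all _ fun x hx => by
      rw [Real.norm_of_nonneg (hf0 x)]; exact hfh x hx
  rw [← Ioc_union_Ioi_eq_Ioi hsc,
    setIntegral_union (Ioc_disjoint_Ioi le_rfl) measurableSet_Ioi hfg' hfh']
  exact add_le_add (setIntegral_mono_on hfg' hg measurableSet_Ioc hfg)
    (setIntegral_mono_on hfh' hh measurableSet_Ioi hfh)

lemma rpow_neg_one_third_pow_three_mul {m : ℝ} (hm : 0 < m) :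
    (m ^ (-(1:ℝ)/3)) ^ 3 * m = 1 := by
  rw [← Real.rpow_natCast, ← Real.rpow_mul hm.le, ← Real.rpow_add_one hm.ne']
  norm_num

lemma rpow_neg_two_thirds_eq_sq {m : ℝ} (hm : 0 ≤ m) :
    m ^ (-(2:ℝ)/3) = (m ^ (-(1:ℝ)/3)) ^ 2 := by
  rw [← Real.rpow_natCast, ← Real.rpow_mul hm]
  norm_num

lemma rescaled_horizon_eq {L m ρ t : ℝ} (htm : t ^ 3 * m = 1)
    (hm : m = ρ / 2 * (1 + L / 3 * ρ ^ 2)) :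
    ρ * t * t ^ 2 / 2 + L / 6 * (ρ * t) ^ 3 = 1 := by
  linear_combination -t ^ 3 * hm + htm

lemma integral_Ioi_horizon_eq_rescaled {L m t : ℝ} (a : ℝ) (ht : 0 < t) (htm : t ^ 3 * m = 1) :
    ∫ ρ in Ioi a, 1 / Real.sqrt (ρ ^ 2 - 2 * m * ρ + L / 3 * ρ ^ 4) =
      t * ∫ x in Ioi (a * t), 1 / Real.sqrt (t ^ 2 * x ^ 2 - 2 * x + L / 3 * x ^ 4) := by
  set g : ℝ → ℝ := fun x => 1 / Real.sqrt (t ^ 2 * x ^ 2 - 2 * x + L / 3 * x ^ 4)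
  have hg : ∀ ρ, g (t * ρ) = (t ^ 2)⁻¹ * (1 / Real.sqrt (ρ ^ 2 - 2 * m * ρ + L / 3 * ρ ^ 4)) := by
    intro ρ
    have hrad : t ^ 2 * (t * ρ) ^ 2 - 2 * (t * ρ) + L / 3 * (t * ρ) ^ 4 =
        (t ^ 2) ^ 2 * (ρ ^ 2 - 2 * m * ρ + L / 3 * ρ ^ 4) := by
      linear_combination (2 * t * ρ) * htm
    simp only [g, hrad, Real.sqrt_mul (sq_nonneg (t ^ 2)), Real.sqrt_sq (sq_nonneg t), one_div,
      mul_inv]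
  calc ∫ ρ in Ioi a, 1 / Real.sqrt (ρ ^ 2 - 2 * m * ρ + L / 3 * ρ ^ 4)
      = t ^ 2 * ∫ ρ in Ioi a, g (t * ρ) := by
        simp only [hg, integral_const_mul]
        rw [mul_inv_cancel_left₀ (by positivity)]
    _ = t * ∫ x in Ioi (a * t), g x := by
        rw [integral_comp_mul_left_Ioi g a ht, smul_eq_mul, mul_comm t a]
        field_simp

section RescaledRadicand

variable {L s t x : ℝ}

lemma sub_le_radicand (hL : 0 < L) (hs : 0 < s) (hrel : s * t ^ 2 / 2 + L / 6 * s ^ 3 = 1)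
    (hx : s ≤ x) : x - s ≤ t ^ 2 * x ^ 2 - 2 * x + L / 3 * x ^ 4 := by
  have hfactor : t ^ 2 * x ^ 2 - 2 * x + L / 3 * x ^ 4 =
      (x - s) * (t ^ 2 * (x + s) - 2 + L / 3 * (x + s) * (x ^ 2 + s ^ 2)) := by
    linear_combination (2 * s) * hrel
  have hcubic : 4 * s ^ 3 ≤ (x + s) * (x ^ 2 + s ^ 2) := by
    have hx0 : 0 < x := hs.trans_le hx
    nlinarith [mul_nonneg (sub_nonneg.mpr hx) (by positivity : 0 ≤ x ^ 2 + 2 * x * s + 3 * s ^ 2)]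
  have hquot : 1 ≤ t ^ 2 * (x + s) - 2 + L / 3 * (x + s) * (x ^ 2 + s ^ 2) := by
    nlinarith [mul_nonneg (sq_nonneg t) (sub_nonneg.mpr hx), mul_le_mul_of_nonneg_left hcubic hL.le,
      pow_pos hs 3]
  rw [hfactor]
  exact le_mul_of_one_le_right (sub_nonneg.mpr hx) hquot

lemma quartic_le_radicand (hL : 0 < L) (hx : 12 / L ≤ x ^ 3) :
    L / 6 * x ^ 4 ≤ t ^ 2 * x ^ 2 - 2 * x + L / 3 * x ^ 4 := by
  have hx0 : 0 < x := (Odd.pow_pos_iff (by decide)).mp ((by positivity : 0 < 12 / L).trans_le hx)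
  have h2x : 2 * x ≤ L / 6 * x ^ 4 := by
    have h := mul_le_mul_of_nonneg_left hx (by positivity : 0 ≤ L / 6 * x)
    rw [show L / 6 * x * (12 / L) = 2 * x by field_simp; ring] at h
    linarith
  nlinarith [mul_nonneg (sq_nonneg t) (sq_nonneg x)]

end RescaledRadicand

lemma exists_integral_rescaled_le {L : ℝ} (hL : 0 < L) : ∃ C, ∀ s t : ℝ, 0 < s →
    s * t ^ 2 / 2 + L / 6 * s ^ 3 = 1 →
      ∫ x in Ioi s, 1 / Real.sqrt (t ^ 2 * x ^ 2 - 2 * x + L / 3 * x ^ 4) ≤ C := by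
  refine ⟨2 * Real.sqrt (max 1 (12 / L)) + (Real.sqrt (L / 6))⁻¹ * (max 1 (12 / L))⁻¹,
    fun s t hs hrel => ?_⟩
  set c := max 1 (12 / L)
  have hc1 : 1 ≤ c := le_max_left _ _
  have hc_cube : 12 / L ≤ c ^ 3 := (le_max_right _ _).trans (le_self_pow₀ hc1 (by norm_num))
  have hsc : s ≤ c := by
    refine le_of_pow_le_pow_left₀ (by norm_num : 3 ≠ 0) (by positivity) (hc_cube.trans' ?_)
    rw [le_div_iff₀ hL]
    nlinarith [mul_nonneg hs.le (sq_nonneg t)]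
  have hbound := setIntegral_Ioi_le_of_le_of_le hsc
    (f := fun x => 1 / Real.sqrt (t ^ 2 * x ^ 2 - 2 * x + L / 3 * x ^ 4))
    (by fun_prop : Measurable _).aestronglyMeasurable (fun x => by positivity)
    (integrableOn_Ioc_one_div_sqrt_sub hsc)
    ((integrableOn_Ioi_one_div_sq (by positivity)).const_mul (Real.sqrt (L / 6))⁻¹)
    (fun x hx => one_div_le_one_div_of_le (Real.sqrt_pos.mpr (sub_pos.mpr hx.1))
      (Real.sqrt_le_sqrt (sub_le_radicand hL hs hrel hx.1.le)))
    (fun x hx => by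
      have hx0 : 0 < x := by linarith [mem_Ioi.mp hx]
      rw [← one_div_sqrt_mul_pow_four]
      exact one_div_le_one_div_of_le (by positivity) (Real.sqrt_le_sqrt
        (quartic_le_radicand hL (hc_cube.trans (pow_le_pow_left₀ (by positivity) hx.le 3)))))
  rw [integral_Ioc_one_div_sqrt_sub hsc, integral_const_mul,
    integral_Ioi_one_div_sq (by positivity)] at hbound
  exact hbound.trans (by gcongr; linarith)

/-- For fixed `Λ < 0`, after the substitution `ρ̄ = ρ m^{-1/3}` the rescaled horizon
integral tends to `0` as `m → ∞`; consequently
`∫_{ρ_h(m)}^∞ dρ/√(ρ² - 2mρ + (|Λ|/3)ρ⁴) → 0` as `m → ∞`. -/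
theorem rescaled_horizon_integral_tendsto_zero (Λ : ℝ) (hΛ : Λ < 0) (ρh : ℝ → ℝ)
    (hρh : ∀ m > (0:ℝ), 0 < ρh m ∧ m = ρh m / 2 * (1 + |Λ| / 3 * (ρh m) ^ 2)) :
    Tendsto (fun m : ℝ => m ^ (-(1:ℝ)/3) *
        ∫ x in Set.Ioi (ρh m * m ^ (-(1:ℝ)/3)),
          1 / Real.sqrt (m ^ (-(2:ℝ)/3) * x ^ 2 - 2 * x + |Λ| / 3 * x ^ 4))
      atTop (nhds 0) ∧
    Tendsto (fun m : ℝ =>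
        ∫ ρ in Set.Ioi (ρh m), 1 / Real.sqrt (ρ ^ 2 - 2 * m * ρ + |Λ| / 3 * ρ ^ 4))
      atTop (nhds 0) := by
  have hL : 0 < |Λ| := abs_pos.mpr hΛ.ne
  obtain ⟨C, hC⟩ := exists_integral_rescaled_le hL
  have hlim : Tendsto (fun m : ℝ => m ^ (-(1:ℝ)/3) * C) atTop (nhds 0) := by
    simpa [neg_div] using (tendsto_rpow_neg_atTop (by norm_num : (0:ℝ) < 1/3)).mul_const C
  have hfirst : Tendsto (fun m : ℝ => m ^ (-(1:ℝ)/3) *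
      ∫ x in Set.Ioi (ρh m * m ^ (-(1:ℝ)/3)),
        1 / Real.sqrt (m ^ (-(2:ℝ)/3) * x ^ 2 - 2 * x + |Λ| / 3 * x ^ 4)) atTop (nhds 0) := by
    refine squeeze_zero' ?_ ?_ hlim
    · filter_upwards [eventually_gt_atTop 0] with m hm
      exact mul_nonneg (by positivity) (integral_nonneg fun x => by positivity)
    · filter_upwards [eventually_gt_atTop 0] with m hm
      obtain ⟨hρ, hm_eq⟩ := hρh m hm
      have htm := rpow_neg_one_third_pow_three_mul hm
      rw [rpow_neg_two_thirds_eq_sq hm.le]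
      exact mul_le_mul_of_nonneg_left (hC _ _ (by positivity) (rescaled_horizon_eq htm hm_eq))
        (by positivity)
  refine ⟨hfirst, hfirst.congr' ?_⟩
  filter_upwards [eventually_gt_atTop 0] with m hm
  rw [integral_Ioi_horizon_eq_rescaled _ (by positivity) (rpow_neg_one_third_pow_three_mul hm),
    rpow_neg_two_thirds_eq_sq hm.le]
end

section
/- Let u ∈ H¹(M) on a Riemannian manifold with boundary satisfy ∫_M (|∇u|² + |Λ| u²) dV = (α/4) ∫_{∂M} h u² dσ with α ∈ [0,1] and Λ ≠ 0, and suppose the trace inequality ∫_{∂M} u² dσ ≤ C⁻¹ ∫_M (|∇u|² + u²) dV holds for some C > 0. If max_{∂M} h < 4C·min{1,|Λ|}, then u = 0. -/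
/-!
Write `G = ∫|∇u|²`, `U = ∫u²` and `B = ∫_{∂M} u²`. Since `min{1,|Λ|}` is below both `1` and
`|Λ|`, the identity and `h ≤ max h` give `min{1,|Λ|} (G + U) ≤ (max h / 4) B`, while the trace
inequality gives `C B ≤ G + U`. When `max h < 4C min{1,|Λ|}` these two bounds are compatible
only if `G + U = 0`, so `u = 0` a.e.
-/

open MeasureTheory

lemma min_one_mul_add_le {G U lam : ℝ} (hG : 0 ≤ G) (hU : 0 ≤ U) :
    min 1 lam * (G + U) ≤ G + lam * U := by
  have h1 : min 1 lam * G ≤ G := by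
    nlinarith [min_le_left 1 lam]
  have h2 : min 1 lam * U ≤ lam * U := mul_le_mul_of_nonneg_right (min_le_right 1 lam) hU
  linarith

lemma eq_zero_of_mul_le_of_le_mul {S B C m k : ℝ} (hS : 0 ≤ S) (hB : 0 ≤ B) (hC : 0 < C)
    (hm : 0 < m) (htrace : C * B ≤ S) (hbound : m * S ≤ k * B) (hk : k < C * m) : S = 0 := by
  rcases le_or_gt k 0 with hk0 | hk0
  · nlinarith [mul_nonpos_of_nonpos_of_nonneg hk0 hB]
  · nlinarith [mul_le_mul_of_nonneg_left htrace hk0.le, mul_le_mul_of_nonneg_left hbound hC.le]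

lemma ae_eq_zero_of_integral_sq_eq_zero {X : Type*} [MeasurableSpace X] {μ : Measure X}
    {u : X → ℝ} (hu : Integrable (fun x => u x ^ 2) μ) (h : ∫ x, u x ^ 2 ∂μ = 0) :
    u =ᵐ[μ] 0 := by
  filter_upwards [(integral_eq_zero_iff_of_nonneg (fun x => sq_nonneg (u x)) hu).mp h]
    with x hx
  exact pow_eq_zero_iff two_ne_zero |>.mp hx

theorem kernel_trivial_general {X : Type*} [MeasurableSpace X] (μ σ : Measure X)
    (u gradsq h : X → ℝ) (lam C hmax a : ℝ)
    (hgrad : ∀ x, 0 ≤ gradsq x) (hlam : 0 < lam) (hC : 0 < C)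
    (ha : a ∈ Set.Icc (0:ℝ) 1)
    (hintu : Integrable (fun x => (u x) ^ 2) μ)
    (hid : ∫ x, gradsq x ∂μ + lam * ∫ x, (u x) ^ 2 ∂μ
            = a / 4 * ∫ x, h x * (u x) ^ 2 ∂σ)
    (hBh0 : 0 ≤ ∫ x, h x * (u x) ^ 2 ∂σ)
    (hBh : ∫ x, h x * (u x) ^ 2 ∂σ ≤ hmax * ∫ x, (u x) ^ 2 ∂σ)
    (htrace : ∫ x, (u x) ^ 2 ∂σ
            ≤ C⁻¹ * (∫ x, gradsq x ∂μ + ∫ x, (u x) ^ 2 ∂μ))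
    (hh : hmax < 4 * C * min 1 lam) :
    u =ᵐ[μ] 0 := by
  set G := ∫ x, gradsq x ∂μ
  set U := ∫ x, (u x) ^ 2 ∂μ
  set B := ∫ x, (u x) ^ 2 ∂σ
  set H := ∫ x, h x * (u x) ^ 2 ∂σ
  have hG : 0 ≤ G := integral_nonneg hgrad
  have hU : 0 ≤ U := integral_nonneg fun x => sq_nonneg (u x)
  have hB : 0 ≤ B := integral_nonneg fun x => sq_nonneg (u x)
  have hCB : C * B ≤ G + U := (le_inv_mul_iff₀ hC).mp htrace
  have hbound : min 1 lam * (G + U) ≤ hmax / 4 * B :=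
    calc min 1 lam * (G + U) ≤ G + lam * U := min_one_mul_add_le hG hU
      _ = a / 4 * H := hid
      _ ≤ 1 / 4 * H := by gcongr; exact ha.2
      _ ≤ hmax / 4 * B := by linarith
  have hGU : G + U = 0 :=
    eq_zero_of_mul_le_of_le_mul (add_nonneg hG hU) hB hC (lt_min one_pos hlam) hCB hbound
      (by linarith)
  exact ae_eq_zero_of_integral_sq_eq_zero hintu (by linarith)

/-- Triviality of the kernel: if `u ∈ H¹(M)` satisfies the integration-by-parts
identity `∫(|∇u|² + |Λ|u²)dV = (α/4)∫_{∂M} h u² dσ` with `α ∈ [0,1]`, the trace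
inequality `∫_{∂M} u² dσ ≤ C⁻¹ ∫(|∇u|² + u²)dV` holds, and
`max_{∂M} h < 4C min{1,|Λ|}`, then `u = 0` (a.e.). -/
theorem kernel_trivial {X : Type*} [MeasurableSpace X] (μ σ : Measure X)
    (u gradsq h : X → ℝ) (lam C hmax a : ℝ)
    (hgrad : ∀ x, 0 ≤ gradsq x) (hlam : 0 < lam) (hC : 0 < C)
    (ha : a ∈ Set.Icc (0:ℝ) 1)
    (hintg : Integrable gradsq μ)
    (hintu : Integrable (fun x => (u x) ^ 2) μ)
    (hid : ∫ x, gradsq x ∂μ + lam * ∫ x, (u x) ^ 2 ∂μ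
            = a / 4 * ∫ x, h x * (u x) ^ 2 ∂σ)
    (hBh0 : 0 ≤ ∫ x, h x * (u x) ^ 2 ∂σ)
    (hBh : ∫ x, h x * (u x) ^ 2 ∂σ ≤ hmax * ∫ x, (u x) ^ 2 ∂σ)
    (hBu : 0 ≤ ∫ x, (u x) ^ 2 ∂σ)
    (htrace : ∫ x, (u x) ^ 2 ∂σ
            ≤ C⁻¹ * (∫ x, gradsq x ∂μ + ∫ x, (u x) ^ 2 ∂μ))
    (hh : hmax < 4 * C * min 1 lam) :
    u =ᵐ[μ] 0 :=
  kernel_trivial_general μ σ u gradsq h lam C hmax a hgrad hlam hC ha hintu hid hBh0 hBh htrace hh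
end
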